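/- Let m and n be positive integers, let γ > 0 and d > 0, let S be a finite set, and let R be a randomized map from S^m to probability distributions on a finite set. Suppose there exists a probability distribution D such that Δ(R(x̄), D) ≤ d for every x̄ ∈ S^m. Then for every random variable X that is uniform over a multiset of at most 2⁹·m·n/γ³ tuples in S^m, the mutual information satisfies I(X; R(X)) ≤ max{1, 13 + log₂(m·n·d²/γ³)}, where the mutual information is measured in bits. -/

import Mathlib

/-- Mutual information (in bits) of a joint pmf `q` on a product of finite sets. -/
noncomputable def mutualInfo {γ β : Type*} [Fintype γ] [Fintype β] (q : γ → β → ℝ) : ℝ :=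
  ∑ v, ∑ b,
    if q v b = 0 then 0 else
      q v b * Real.logb 2 (q v b / ((∑ b', q v b') * (∑ v', q v' b)))

open Real Finset


private lemma aux_convex {x N : ℝ} (hx : 1 ≤ x) (hxN : x ≤ N) (hN : 1 < N) :
    (N - 1) * (x * Real.log x) ≤ (x - 1) * (N * Real.log N) := by
  have hN1 : (0:ℝ) < N - 1 := by linarith
  have ha : 0 ≤ (N - x) / (N - 1) := div_nonneg (by linarith) hN1.le
  have hb : 0 ≤ (x - 1) / (N - 1) := div_nonneg (by linarith) hN1.le
  have hab : (N - x) / (N - 1) + (x - 1) / (N - 1) = 1 := by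
    rw [← add_div, show N - x + (x - 1) = N - 1 by ring, div_self hN1.ne']
  have h := Real.convexOn_mul_log.2 (Set.mem_Ici.2 (by norm_num : (0:ℝ) ≤ 1))
      (Set.mem_Ici.2 (by linarith : (0:ℝ) ≤ N)) ha hb hab
  simp only [smul_eq_mul, Real.log_one, mul_one, mul_zero, zero_add] at h
  have hpt : (N - x) / (N - 1) + (x - 1) / (N - 1) * N = x := by
    field_simp
    ring
  rw [hpt] at h
  have := mul_le_mul_of_nonneg_left h hN1.le
  calc (N - 1) * (x * Real.log x) ≤ (N - 1) * ((x - 1) / (N - 1) * (N * Real.log N)) := this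
    _ = (x - 1) * (N * Real.log N) := by field_simp

private lemma aux_key {y : ℝ} (hy : 1 ≤ y) :
    y * (2:ℝ) ^ (-(1 + y) / 2) ≤ 1 - (2:ℝ) ^ (-y) := by
  set s : ℝ := (2:ℝ) ^ ((y - 1) / 2) with hs
  have hs1 : 1 ≤ s := by
    rw [hs, show (1:ℝ) = (2:ℝ) ^ (0:ℝ) from (Real.rpow_zero 2).symm]
    exact Real.rpow_le_rpow_of_exponent_le one_le_two (by linarith)
  have hs0 : (0:ℝ) < s := lt_of_lt_of_le one_pos hs1
  have hsq : s * s = (2:ℝ) ^ (y - 1) := by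
    rw [hs, ← Real.rpow_add two_pos]; congr 1; ring
  have hadd : ∀ z : ℝ, (2:ℝ) ^ (1 + z) = 2 * (2:ℝ) ^ z := by
    intro z; rw [Real.rpow_add two_pos, Real.rpow_one]
  have h2s : (2:ℝ) ^ ((y + 1) / 2) = 2 * s := by
    rw [hs, show (y + 1) / 2 = 1 + (y - 1) / 2 by ring, hadd]
  have h2ss : (2:ℝ) ^ (y:ℝ) = 2 * (s * s) := by
    rw [show (y:ℝ) = 1 + (y - 1) by ring, hadd, hsq]
  have hA : (2:ℝ) ^ (-(1 + y) / 2) = (2 * s)⁻¹ := by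
    rw [show -(1 + y) / 2 = -((y + 1) / 2) by ring, Real.rpow_neg (by norm_num), h2s]
  have hB : (2:ℝ) ^ (-y) = (2 * (s * s))⁻¹ := by
    rw [Real.rpow_neg (by norm_num), h2ss]
  set L := Real.log s with hL
  have hlogs : L = (y - 1) / 2 * Real.log 2 := by rw [hL, hs, Real.log_rpow two_pos]
  have hl2 : (0.6931471803:ℝ) < Real.log 2 := Real.log_two_gt_d9
  have hl2pos : (0:ℝ) < Real.log 2 := by linarith
  have hyL : y = 2 * L / Real.log 2 + 1 := by
    rw [hlogs]; field_simp; ring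
  have hLs : 2 * s * L ≤ s * s - 1 := by
    have h1 : L ≤ Real.sinh L := Real.self_le_sinh_iff.2 (Real.log_nonneg hs1)
    have h3 : L ≤ (s - s⁻¹) / 2 := h1.trans_eq (Real.sinh_log hs0)
    have h4 := mul_le_mul_of_nonneg_left h3 (by positivity : (0:ℝ) ≤ 2 * s)
    calc 2 * s * L ≤ 2 * s * ((s - s⁻¹) / 2) := h4
      _ = s * s - 1 := by field_simp
  have hfac : 0 ≤ (s - 1) * ((2 * Real.log 2 - 1) * (s + 1) - Real.log 2) := by
    apply mul_nonneg (by linarith)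
    nlinarith
  have hQ : s * Real.log 2 + 2 * s * L ≤ 2 * (s * s) * Real.log 2 - Real.log 2 := by
    nlinarith [hLs, hfac]
  have hys : y * s ≤ 2 * (s * s) - 1 := by
    rw [← mul_le_mul_iff_left₀ hl2pos]
    have he : y * s * Real.log 2 = s * Real.log 2 + 2 * s * L := by
      rw [hyL]; field_simp; ring
    rw [he]; linarith [hQ]
  have hpos2 : (0:ℝ) < 2 * (s * s) := by positivity
  have e3 : s * (2 * (s * s))⁻¹ = (2 * s)⁻¹ := by
    field_simp
  rw [hA, hB]
  calc y * (2 * s)⁻¹ = y * s * (2 * (s * s))⁻¹ := by rw [mul_assoc, e3]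
    _ ≤ (2 * (s * s) - 1) * (2 * (s * s))⁻¹ :=
        mul_le_mul_of_nonneg_right hys (inv_nonneg.2 hpos2.le)
    _ = 1 - (2 * (s * s))⁻¹ := by field_simp


private lemma aux_term {r p Nr : ℝ} (hp : 0 < p) (hpr : p < r) (hrN : r ≤ Nr * p)
    (hN : 2 ≤ Nr) :
    r * Real.logb 2 (r / p) ≤ (r - p) * (Nr / (Nr - 1) * Real.logb 2 Nr) := by
  have hx1 : 1 ≤ r / p := (one_le_div hp).2 hpr.le
  have hxN : r / p ≤ Nr := (div_le_iff₀ hp).2 hrN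
  have hN1 : (1:ℝ) < Nr := by linarith
  have h := aux_convex hx1 hxN hN1
  have hl2pos : (0:ℝ) < Real.log 2 := Real.log_pos one_lt_two
  have hNr1 : (0:ℝ) < Nr - 1 := by linarith
  have h2 : (Nr - 1) * (r * Real.log (r / p)) ≤ (r - p) * (Nr * Real.log Nr) := by
    have h' := mul_le_mul_of_nonneg_left h hp.le
    calc (Nr - 1) * (r * Real.log (r / p))
        = p * ((Nr - 1) * (r / p * Real.log (r / p))) := by field_simp
      _ ≤ p * ((r / p - 1) * (Nr * Real.log Nr)) := h'
      _ = (r - p) * (Nr * Real.log Nr) := by field_simp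
  have hinv : (0:ℝ) ≤ ((Nr - 1) * Real.log 2)⁻¹ := by positivity
  have h4 := mul_le_mul_of_nonneg_left h2 hinv
  calc r * Real.logb 2 (r / p)
      = ((Nr - 1) * Real.log 2)⁻¹ * ((Nr - 1) * (r * Real.log (r / p))) := by
        rw [Real.logb]; field_simp
    _ ≤ ((Nr - 1) * Real.log 2)⁻¹ * ((r - p) * (Nr * Real.log Nr)) := h4
    _ = (r - p) * (Nr / (Nr - 1) * Real.logb 2 Nr) := by
        rw [Real.logb]; field_simp

set_option maxHeartbeats 1600000 in
/-- If a randomized map `R` on `m`-tuples over a finite set `ι`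
always outputs a distribution within statistical distance `d` of a fixed
distribution `D` (the worst-case to distribution condition), then for every
random variable `X` uniform over a multiset of at most `2⁹·m·n/γ³` tuples,
`I(X; R(X)) ≤ max{1, 13 + log₂(m·n·d²/γ³)}` (bits). -/
theorem stmt_13 (m n : ℕ) (hm : 0 < m) (hn : 0 < n)
    (γ d : ℝ) (hγ : 0 < γ) (hd : 0 < d)
    {ι β : Type*} [Fintype ι] [DecidableEq ι] [Fintype β]
    (R : (Fin m → ι) → β → ℝ)
    (hR0 : ∀ v b, 0 ≤ R v b) (hR1 : ∀ v, ∑ b, R v b = 1)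
    (D : β → ℝ) (hD0 : ∀ b, 0 ≤ D b) (hD1 : ∑ b, D b = 1)
    (hclose : ∀ v : Fin m → ι, (1 / 2) * ∑ b, |R v b - D b| ≤ d)
    (X : (Fin m → ι) → ℝ)
    (hX : ∃ K : Multiset (Fin m → ι), K ≠ 0 ∧
      (Multiset.card K : ℝ) ≤ 2 ^ 9 * (m : ℝ) * (n : ℝ) / γ ^ 3 ∧
      ∀ v, X v = (K.count v : ℝ) / (Multiset.card K : ℝ)) :
    mutualInfo (fun v b => X v * R v b)
      ≤ max 1 (13 + Real.logb 2 ((m : ℝ) * (n : ℝ) * d ^ 2 / γ ^ 3)) := by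
  classical
  obtain ⟨K, hK0, hKle, hXv⟩ := hX
  have hNpos : 0 < Multiset.card K := Multiset.card_pos.2 hK0
  set Nr : ℝ := (Multiset.card K : ℝ) with hNrdef
  have hNr1 : (1:ℝ) ≤ Nr := by rw [hNrdef]; exact_mod_cast hNpos
  have hNr0 : (0:ℝ) < Nr := by linarith
  set P : β → ℝ := fun b => ∑ v, X v * R v b with hPdef
  have hX0 : ∀ v, 0 ≤ X v := fun v => by
    rw [hXv v]; positivity
  have hcountN : ∑ v : (Fin m → ι), K.count v = Multiset.card K := by
    rw [← Multiset.toFinset_sum_count_eq K]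
    exact (Finset.sum_subset (Finset.subset_univ _) fun x _ hx =>
      Multiset.count_eq_zero_of_notMem (by simpa using hx)).symm
  have hcount : ∑ v : (Fin m → ι), (K.count v : ℝ) = Nr := by
    rw [hNrdef]; exact_mod_cast hcountN
  have hXsum : ∑ v, X v = 1 := by
    simp only [hXv]
    rw [← Finset.sum_div, hcount, div_self hNr0.ne']
  have hP0 : ∀ b, 0 ≤ P b := fun b =>
    Finset.sum_nonneg fun v _ => mul_nonneg (hX0 v) (hR0 v b)
  have hPsum : ∑ b, P b = 1 := by
    calc ∑ b, P b = ∑ v, ∑ b, X v * R v b := Finset.sum_comm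
      _ = ∑ v, X v := Finset.sum_congr rfl fun v _ => by
          rw [← Finset.mul_sum, hR1 v, mul_one]
      _ = 1 := hXsum
  have hPX : ∀ v b, X v * R v b ≤ P b := fun v b =>
    Finset.single_le_sum (f := fun v' => X v' * R v' b)
      (fun v' _ => mul_nonneg (hX0 v') (hR0 v' b)) (Finset.mem_univ v)
  have hXlb : ∀ v, X v ≠ 0 → 1 / Nr ≤ X v := by
    intro v hv
    have hc1 : (1:ℝ) ≤ (K.count v : ℝ) := by
      have hne : K.count v ≠ 0 := by
        intro h0
        rw [hXv v, h0] at hv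
        simp at hv
      exact_mod_cast Nat.one_le_iff_ne_zero.2 hne
    rw [hXv v]
    gcongr
  have hRN : ∀ v b, X v ≠ 0 → R v b ≤ Nr * P b := by
    intro v b hv
    have h1 : 1 / Nr * R v b ≤ X v * R v b :=
      mul_le_mul_of_nonneg_right (hXlb v hv) (hR0 v b)
    have h2 := h1.trans (hPX v b)
    calc R v b = Nr * (1 / Nr * R v b) := by field_simp
      _ ≤ Nr * P b := mul_le_mul_of_nonneg_left h2 hNr0.le
  have hrow : ∀ v, (∑ b', X v * R v b') = X v := fun v => by
    rw [← Finset.mul_sum, hR1 v, mul_one]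
  have hMI : mutualInfo (fun v b => X v * R v b)
      = ∑ v, ∑ b, (if X v * R v b = 0 then 0
          else X v * (R v b * Real.logb 2 (R v b / P b))) := by
    simp only [mutualInfo]
    refine Finset.sum_congr rfl fun v _ => Finset.sum_congr rfl fun b _ => ?_
    by_cases h : X v * R v b = 0
    · simp [h]
    · have hx : X v ≠ 0 := left_ne_zero_of_mul h
      rw [if_neg h, if_neg h, hrow v]
      have hcol : (∑ v', X v' * R v' b) = P b := rfl
      rw [hcol, show X v * R v b / (X v * P b) = R v b / P b from
        mul_div_mul_left _ _ hx]
      ring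
  have hlogbN0 : 0 ≤ Real.logb 2 Nr := Real.logb_nonneg one_lt_two hNr1
  have hB1 : mutualInfo (fun v b => X v * R v b) ≤ Real.logb 2 Nr := by
    rw [hMI]
    calc ∑ v, ∑ b, (if X v * R v b = 0 then 0
            else X v * (R v b * Real.logb 2 (R v b / P b)))
        ≤ ∑ v, ∑ b, X v * R v b * Real.logb 2 Nr := by
          refine Finset.sum_le_sum fun v _ => Finset.sum_le_sum fun b _ => ?_
          by_cases h : X v * R v b = 0
          · rw [if_pos h]
            exact mul_nonneg (mul_nonneg (hX0 v) (hR0 v b)) hlogbN0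
          · rw [if_neg h]
            have hx : X v ≠ 0 := left_ne_zero_of_mul h
            have hxp : 0 < X v := lt_of_le_of_ne (hX0 v) (Ne.symm hx)
            have hr0 : 0 < R v b :=
              lt_of_le_of_ne (hR0 v b) (Ne.symm (right_ne_zero_of_mul h))
            have hp0 : 0 < P b := lt_of_lt_of_le (mul_pos hxp hr0) (hPX v b)
            have hratio : R v b / P b ≤ Nr := (div_le_iff₀ hp0).2 (hRN v b hx)
            have hlog : Real.logb 2 (R v b / P b) ≤ Real.logb 2 Nr :=
              Real.logb_le_logb_of_le one_lt_two (by positivity) hratio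
            calc X v * (R v b * Real.logb 2 (R v b / P b))
                ≤ X v * (R v b * Real.logb 2 Nr) :=
                  mul_le_mul_of_nonneg_left
                    (mul_le_mul_of_nonneg_left hlog hr0.le) (hX0 v)
              _ = X v * R v b * Real.logb 2 Nr := by ring
      _ = ∑ v, X v * Real.logb 2 Nr :=
          Finset.sum_congr rfl fun v _ => by rw [← Finset.sum_mul, hrow v]
      _ = Real.logb 2 Nr := by rw [← Finset.sum_mul, hXsum, one_mul]
  have hRD : ∀ v, ∑ b, |R v b - D b| ≤ 2 * d := fun v => by linarith [hclose v]
  have hDP : ∑ b, |D b - P b| ≤ 2 * d := by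
    have step1 : ∀ b, |D b - P b| ≤ ∑ v, X v * |D b - R v b| := by
      intro b
      have he : D b - P b = ∑ v, X v * (D b - R v b) := by
        simp only [mul_sub]
        rw [Finset.sum_sub_distrib, ← Finset.sum_mul, hXsum, one_mul]
      rw [he]
      refine (Finset.abs_sum_le_sum_abs _ _).trans (le_of_eq ?_)
      exact Finset.sum_congr rfl fun v _ => by rw [abs_mul, abs_of_nonneg (hX0 v)]
    calc ∑ b, |D b - P b| ≤ ∑ b, ∑ v, X v * |D b - R v b| :=
          Finset.sum_le_sum fun b _ => step1 b
      _ = ∑ v, X v * ∑ b, |D b - R v b| := by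
          rw [Finset.sum_comm]
          exact Finset.sum_congr rfl fun v _ => (Finset.mul_sum _ _ _).symm
      _ ≤ ∑ v, X v * (2 * d) := Finset.sum_le_sum fun v _ => by
          refine mul_le_mul_of_nonneg_left ?_ (hX0 v)
          rw [Finset.sum_congr rfl fun b (_ : b ∈ Finset.univ) =>
            abs_sub_comm (D b) (R v b)]
          exact hRD v
      _ = 2 * d := by rw [← Finset.sum_mul, hXsum, one_mul]
  have htv : ∀ v, ∑ b, max (R v b - P b) 0 ≤ 2 * d := by
    intro v
    have hmax : ∀ a : ℝ, max a 0 = (a + |a|) / 2 := by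
      intro a
      rcases le_total a 0 with h | h
      · rw [max_eq_right h, abs_of_nonpos h]; ring
      · rw [max_eq_left h, abs_of_nonneg h]; ring
    have hsub : ∑ b, (R v b - P b) = 0 := by
      rw [Finset.sum_sub_distrib, hR1 v, hPsum, sub_self]
    have habs : ∑ b, |R v b - P b| ≤ 4 * d := by
      calc ∑ b, |R v b - P b| ≤ ∑ b, (|R v b - D b| + |D b - P b|) :=
            Finset.sum_le_sum fun b _ => abs_sub_le _ _ _
        _ = (∑ b, |R v b - D b|) + ∑ b, |D b - P b| := Finset.sum_add_distrib
        _ ≤ 2 * d + 2 * d := add_le_add (hRD v) hDP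
        _ = 4 * d := by ring
    calc ∑ b, max (R v b - P b) 0
        = ∑ b, ((R v b - P b) + |R v b - P b|) / 2 :=
          Finset.sum_congr rfl fun b _ => hmax _
      _ = ((∑ b, (R v b - P b)) + ∑ b, |R v b - P b|) / 2 := by
          rw [← Finset.sum_div, Finset.sum_add_distrib]
      _ ≤ (0 + 4 * d) / 2 := by rw [hsub]; linarith [habs]
      _ = 2 * d := by ring
  have hB2 : (2:ℝ) ≤ Nr → mutualInfo (fun v b => X v * R v b)
      ≤ 2 * d * (Nr / (Nr - 1) * Real.logb 2 Nr) := by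
    intro h2N
    have hC0 : 0 ≤ Nr / (Nr - 1) * Real.logb 2 Nr :=
      mul_nonneg (div_nonneg hNr0.le (by linarith)) hlogbN0
    rw [hMI]
    calc ∑ v, ∑ b, (if X v * R v b = 0 then 0
            else X v * (R v b * Real.logb 2 (R v b / P b)))
        ≤ ∑ v, ∑ b, X v * (max (R v b - P b) 0 * (Nr / (Nr - 1) * Real.logb 2 Nr)) := by
          refine Finset.sum_le_sum fun v _ => Finset.sum_le_sum fun b _ => ?_
          by_cases h : X v * R v b = 0
          · rw [if_pos h]
            exact mul_nonneg (hX0 v) (mul_nonneg (le_max_right _ 0) hC0)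
          · rw [if_neg h]
            have hx : X v ≠ 0 := left_ne_zero_of_mul h
            have hxp : 0 < X v := lt_of_le_of_ne (hX0 v) (Ne.symm hx)
            have hr0 : 0 < R v b :=
              lt_of_le_of_ne (hR0 v b) (Ne.symm (right_ne_zero_of_mul h))
            have hp0 : 0 < P b := lt_of_lt_of_le (mul_pos hxp hr0) (hPX v b)
            refine mul_le_mul_of_nonneg_left ?_ (hX0 v)
            rcases le_or_gt (R v b) (P b) with hle | hlt
            · have hlog : Real.logb 2 (R v b / P b) ≤ 0 :=
                Real.logb_nonpos one_lt_two (by positivity) ((div_le_one hp0).2 hle)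
              have hterm : R v b * Real.logb 2 (R v b / P b) ≤ 0 :=
                mul_nonpos_of_nonneg_of_nonpos hr0.le hlog
              rw [max_eq_right (by linarith : R v b - P b ≤ 0), zero_mul]
              exact hterm
            · have hterm := aux_term hp0 hlt (hRN v b hx) h2N
              rwa [max_eq_left (by linarith : (0:ℝ) ≤ R v b - P b)]
      _ = ∑ v, X v * ((∑ b, max (R v b - P b) 0) * (Nr / (Nr - 1) * Real.logb 2 Nr)) :=
          Finset.sum_congr rfl fun v _ => by
            rw [← Finset.mul_sum, ← Finset.sum_mul]
      _ ≤ ∑ v, X v * (2 * d * (Nr / (Nr - 1) * Real.logb 2 Nr)) :=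
          Finset.sum_le_sum fun v _ =>
            mul_le_mul_of_nonneg_left
              (mul_le_mul_of_nonneg_right (htv v) hC0) (hX0 v)
      _ = 2 * d * (Nr / (Nr - 1) * Real.logb 2 Nr) := by
          rw [← Finset.sum_mul, hXsum, one_mul]
  -- numerical endgame
  have hm1 : (1:ℝ) ≤ (m:ℝ) := by exact_mod_cast hm
  have hn1 : (1:ℝ) ≤ (n:ℝ) := by exact_mod_cast hn
  have hMpos : (0:ℝ) < 2 ^ 9 * (m:ℝ) * (n:ℝ) / γ ^ 3 := by positivity
  have heq : 13 + Real.logb 2 ((m:ℝ) * (n:ℝ) * d ^ 2 / γ ^ 3)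
      = 4 + Real.logb 2 (2 ^ 9 * (m:ℝ) * (n:ℝ) / γ ^ 3) + 2 * Real.logb 2 d := by
    have h1 : (m:ℝ) * (n:ℝ) * d ^ 2 / γ ^ 3
        = (2 ^ 9 * (m:ℝ) * (n:ℝ) / γ ^ 3) * d ^ 2 / 2 ^ 9 := by
      field_simp
    rw [h1, Real.logb_div (by positivity) (by positivity),
      Real.logb_mul (by positivity) (by positivity), Real.logb_pow, Real.logb_pow,
      Real.logb_self_eq_one one_lt_two]
    push_cast
    ring
  by_contra hcon
  push_neg at hcon
  have hT1 : 1 < mutualInfo (fun v b => X v * R v b) :=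
    lt_of_le_of_lt (le_max_left _ _) hcon
  have hT2 : 4 + Real.logb 2 (2 ^ 9 * (m:ℝ) * (n:ℝ) / γ ^ 3) + 2 * Real.logb 2 d
      < mutualInfo (fun v b => X v * R v b) := by
    rw [← heq]; exact lt_of_le_of_lt (le_max_right _ _) hcon
  have hlN : 1 < Real.logb 2 Nr := lt_of_lt_of_le hT1 hB1
  have h2N : (2:ℝ) < Nr := by
    have h := (Real.lt_logb_iff_rpow_lt one_lt_two hNr0).1 hlN
    rwa [Real.rpow_one] at h
  have hB2' := hB2 h2N.le
  have hNM : Nr ≤ 2 ^ 9 * (m:ℝ) * (n:ℝ) / γ ^ 3 := hKle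
  have hlM : Real.logb 2 Nr ≤ Real.logb 2 (2 ^ 9 * (m:ℝ) * (n:ℝ) / γ ^ 3) :=
    Real.logb_le_logb_of_le one_lt_two hNr0 hNM
  have hNr1' : (0:ℝ) < Nr - 1 := by linarith
  have hd2 : Real.logb 2 d < -2 := by linarith [hB1, hlM, hT2]
  have hd4 : d < 1 / 4 := by
    have h := (Real.logb_lt_iff_lt_rpow one_lt_two hd).1 hd2
    have h4 : (2:ℝ) ^ (-2:ℝ) = 1 / 4 := by
      rw [show (-2:ℝ) = -(2:ℝ) from rfl, Real.rpow_neg (by norm_num),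
        show (2:ℝ) = ((2:ℕ):ℝ) by norm_num, Real.rpow_natCast]
      norm_num
    rw [h4] at h
    exact h
  set ℓ := Real.logb 2 Nr with hldef
  set c := 2 * d * (Nr / (Nr - 1)) with hcdef
  have hc0 : 0 < c := by rw [hcdef]; positivity
  have hratio2 : Nr / (Nr - 1) ≤ 2 := by rw [div_le_iff₀ hNr1']; linarith
  have hc1 : c < 1 := by
    have h := mul_le_mul_of_nonneg_left hratio2 (by positivity : (0:ℝ) ≤ 2 * d)
    rw [hcdef]
    nlinarith
  have hcl : mutualInfo (fun v b => X v * R v b) ≤ c * ℓ := by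
    calc mutualInfo (fun v b => X v * R v b)
        ≤ 2 * d * (Nr / (Nr - 1) * Real.logb 2 Nr) := hB2'
      _ = c * ℓ := by rw [hcdef]; ring
  have h1c : 1 < c * ℓ := lt_of_lt_of_le hT1 hcl
  set y := 1 / c with hydef
  have hy1 : 1 < y := by
    rw [hydef, lt_div_iff₀ hc0]
    linarith [hc1]
  have hyl : y < ℓ := by
    rw [hydef, div_lt_iff₀ hc0, mul_comm]
    exact h1c
  have hkey1 : y + 3 < -(2 * Real.logb 2 d) := by
    have h5 : 4 + ℓ + 2 * Real.logb 2 d < c * ℓ := by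
      have := hT2
      have := hcl
      linarith [hlM]
    have h6 : (c - 1) * ℓ < (c - 1) * y := mul_lt_mul_of_neg_left hyl (by linarith)
    have h7 : (c - 1) * y = 1 - y := by
      rw [hydef]; field_simp
    have h8 : (c - 1) * ℓ = c * ℓ - ℓ := by ring
    linarith
  have hdy : d < (2:ℝ) ^ (-(3 + y) / 2) := by
    have hlt : Real.logb 2 d < -(3 + y) / 2 := by linarith
    exact (Real.logb_lt_iff_lt_rpow one_lt_two hd).1 hlt
  have hNy : (2:ℝ) ^ (y:ℝ) < Nr := (Real.lt_logb_iff_rpow_lt one_lt_two hNr0).1 hyl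
  have h2dy : 2 * d * y = 1 - 1 / Nr := by
    rw [hydef, hcdef]
    field_simp
  have hfin1 : 1 - (2:ℝ) ^ (-y) < 1 - 1 / Nr := by
    have hlt : 1 / Nr < (2:ℝ) ^ (-y) := by
      rw [Real.rpow_neg (by norm_num), one_div]
      exact inv_strictAnti₀ (by positivity) hNy
    linarith
  have hfin2 : 1 - 1 / Nr < y * (2:ℝ) ^ (-(1 + y) / 2) := by
    rw [← h2dy]
    have hstep : 2 * d * y < 2 * (2:ℝ) ^ (-(3 + y) / 2) * y :=
      mul_lt_mul_of_pos_right (mul_lt_mul_of_pos_left hdy two_pos)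
        (by linarith : (0:ℝ) < y)
    have hexp : 2 * (2:ℝ) ^ (-(3 + y) / 2) = (2:ℝ) ^ (-(1 + y) / 2) := by
      rw [show -(1 + y) / 2 = 1 + -(3 + y) / 2 by ring, Real.rpow_add two_pos,
        Real.rpow_one]
    rw [hexp] at hstep
    linarith [hstep]
  linarith [aux_key hy1.le, hfin1, hfin2]
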